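/- The GLRT ROC curve R(x) = Q(Q⁻¹(x/2) − μ) + Q(Q⁻¹(x/2) + μ), defined for x ∈ (0,1) and μ > 0, satisfies x ≤ R(x) ≤ 1, is strictly increasing in x, and is strictly increasing in μ. -/
import Mathlib


open MeasureTheory ProbabilityTheory Filter Set Asymptotics Topology

/-- Survival function of the standard normal distribution. -/
noncomputable def Q (k : ℝ) : ℝ :=
  (1 / Real.sqrt (2 * Real.pi)) * ∫ t in Set.Ioi k, Real.exp (-t ^ 2 / 2)

/-- Inverse of the standard normal survival function. -/
noncomputable def Qinv : ℝ → ℝ := Function.invFun Q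

namespace QAux

noncomputable def φ (t : ℝ) : ℝ := Real.exp (-t ^ 2 / 2)

lemma φ_pos (t : ℝ) : 0 < φ t := Real.exp_pos _

lemma φ_cont : Continuous φ :=
  Real.continuous_exp.comp ((continuous_pow 2).neg.div_const 2)

lemma φ_int : Integrable φ := by
  have h := integrable_exp_neg_mul_sq (b := (2⁻¹ : ℝ)) (by norm_num)
  have he : φ = fun t : ℝ => Real.exp (-(2⁻¹ : ℝ) * t ^ 2) := by
    funext t; unfold φ; congr 1; ring
  rw [he]; exact h

lemma φ_total : ∫ t : ℝ, φ t = Real.sqrt (2 * Real.pi) := by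
  have he : φ = fun t : ℝ => Real.exp (-(2⁻¹ : ℝ) * t ^ 2) := by
    funext t; unfold φ; congr 1; ring
  rw [he, integral_gaussian]
  congr 1; rw [div_eq_mul_inv, inv_inv]; ring

lemma C_pos : 0 < 1 / Real.sqrt (2 * Real.pi) := by
  have : (0 : ℝ) < Real.sqrt (2 * Real.pi) :=
    Real.sqrt_pos.mpr (by positivity)
  positivity

lemma Q_def (a : ℝ) : Q a = (1 / Real.sqrt (2 * Real.pi)) * ∫ t in Set.Ioi a, φ t := rfl

lemma Q_sub (a b : ℝ) :
    Q a - Q b = (1 / Real.sqrt (2 * Real.pi)) * ∫ t in a..b, φ t := by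
  rw [Q_def, Q_def, ← mul_sub]
  congr 1
  have h1 := intervalIntegral.integral_Iic_add_Ioi (μ := volume) (f := φ) (b := a)
    φ_int.integrableOn φ_int.integrableOn
  have h2 := intervalIntegral.integral_Iic_add_Ioi (μ := volume) (f := φ) (b := b)
    φ_int.integrableOn φ_int.integrableOn
  have h3 := intervalIntegral.integral_Iic_sub_Iic (μ := volume) (f := φ) (a := a) (b := b)
    φ_int.integrableOn φ_int.integrableOn
  linarith

lemma interval_pos {a b : ℝ} (hab : a < b) : 0 < ∫ t in a..b, φ t := by
  have h := intervalIntegral.integral_lt_integral_of_continuousOn_of_le_of_exists_lt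
    (f := fun _ => (0 : ℝ)) (g := φ) hab continuousOn_const φ_cont.continuousOn
    (fun x _ => (φ_pos x).le) ⟨a, ⟨le_rfl, hab.le⟩, φ_pos a⟩
  simpa using h

lemma Q_strictAnti : StrictAnti Q := by
  intro a b hab
  have h := Q_sub a b
  have := mul_pos C_pos (interval_pos hab)
  linarith

lemma Q_neg (a : ℝ) : Q (-a) + Q a = 1 := by
  have h1 : ∫ t in Set.Ioi (-a), φ t = ∫ t in Set.Iic a, φ t := by
    have h := integral_comp_neg_Ioi (-a) φ
    rw [neg_neg] at h
    rw [← h]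
    apply setIntegral_congr_fun measurableSet_Ioi
    intro x _; simp [φ, neg_sq]
  have h2 := intervalIntegral.integral_Iic_add_Ioi (μ := volume) (f := φ) (b := a)
    φ_int.integrableOn φ_int.integrableOn
  have hs : Real.sqrt (2 * Real.pi) ≠ 0 := by
    have := C_pos; intro h; rw [h] at this; simp at this
  rw [Q_def, Q_def, h1, ← mul_add, h2, φ_total]
  field_simp

lemma Q_zero : Q 0 = 1 / 2 := by
  have := Q_neg 0; rw [neg_zero] at this; linarith

lemma Q_eq_primitive (a : ℝ) :
    Q a = Q 0 - (1 / Real.sqrt (2 * Real.pi)) * ∫ t in (0:ℝ)..a, φ t := by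
  have := Q_sub 0 a; linarith

lemma Q_cont : Continuous Q := by
  have h : Continuous fun a : ℝ => ∫ t in (0:ℝ)..a, φ t :=
    φ_int.continuous_primitive 0
  have : Q = fun a => Q 0 - (1 / Real.sqrt (2 * Real.pi)) * ∫ t in (0:ℝ)..a, φ t := by
    funext a; exact Q_eq_primitive a
  rw [this]
  exact continuous_const.sub (continuous_const.mul h)

lemma Q_tendsto_atTop : Tendsto Q atTop (𝓝 0) := by
  have h1 : Tendsto (fun a : ℝ => ∫ t in (0:ℝ)..a, φ t) atTop
      (𝓝 (∫ t in Set.Ioi (0:ℝ), φ t)) :=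
    intervalIntegral_tendsto_integral_Ioi 0 φ_int.integrableOn tendsto_id
  have h2 : Tendsto (fun a : ℝ => Q 0 - (1 / Real.sqrt (2 * Real.pi)) *
      ∫ t in (0:ℝ)..a, φ t) atTop
      (𝓝 (Q 0 - (1 / Real.sqrt (2 * Real.pi)) * ∫ t in Set.Ioi (0:ℝ), φ t)) :=
    tendsto_const_nhds.sub (h1.const_mul _)
  have h3 : Q 0 - (1 / Real.sqrt (2 * Real.pi)) * ∫ t in Set.Ioi (0:ℝ), φ t = 0 := by
    rw [Q_def]; ring
  rw [h3] at h2
  exact h2.congr fun a => (Q_eq_primitive a).symm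

lemma Q_tendsto_atBot : Tendsto Q atBot (𝓝 1) := by
  have h1 : Tendsto (fun a : ℝ => Q (-a)) atBot (𝓝 0) :=
    Q_tendsto_atTop.comp tendsto_neg_atBot_atTop
  have h2 : Tendsto (fun a : ℝ => 1 - Q (-a)) atBot (𝓝 (1 - 0)) :=
    tendsto_const_nhds.sub h1
  simp only [sub_zero] at h2
  refine h2.congr fun a => ?_
  have := Q_neg (-a); rw [neg_neg] at this; linarith

lemma Q_surj {y : ℝ} (hy : y ∈ Set.Ioo (0:ℝ) 1) : ∃ c, Q c = y := by
  obtain ⟨a, ha⟩ := (Q_tendsto_atTop.eventually_lt_const hy.1).exists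
  obtain ⟨b, hb⟩ := (Q_tendsto_atBot.eventually_const_lt hy.2).exists
  have hmem : y ∈ Set.uIcc (Q a) (Q b) :=
    Set.mem_uIcc.mpr (Or.inl ⟨ha.le, hb.le⟩)
  obtain ⟨c, _, hc⟩ := intermediate_value_uIcc Q_cont.continuousOn hmem
  exact ⟨c, hc⟩

lemma Q_Qinv {y : ℝ} (hy : y ∈ Set.Ioo (0:ℝ) 1) : Q (Qinv y) = y :=
  Function.invFun_eq (Q_surj hy)

lemma Qinv_pos {x : ℝ} (hx : x ∈ Set.Ioo (0:ℝ) 1) : 0 < Qinv (x / 2) := by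
  have hx2 : x / 2 ∈ Set.Ioo (0:ℝ) 1 := ⟨by linarith [hx.1], by linarith [hx.2]⟩
  by_contra h
  push_neg at h
  have := Q_strictAnti.antitone h
  rw [Q_Qinv hx2, Q_zero] at this
  linarith [hx.2]

lemma key_le {c m : ℝ} (hc : 0 < c) (hm : 0 < m) :
    2 * Q c ≤ Q (c - m) + Q (c + m) := by
  have d1 := Q_sub (c - m) c
  have d2 := Q_sub c (c + m)
  have e1 : ∫ x in (c - m)..c, φ x = ∫ x in c..(c + m), φ (2 * c - x) := by
    rw [intervalIntegral.integral_comp_sub_left φ (2 * c)]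
    congr 1 <;> ring
  have hgc : Continuous fun x : ℝ => φ (2 * c - x) := by
    apply φ_cont.comp; continuity
  have hle : ∫ x in c..(c + m), φ x ≤ ∫ x in c..(c + m), φ (2 * c - x) := by
    apply intervalIntegral.integral_mono_on (by linarith)
      (φ_cont.intervalIntegrable _ _) (hgc.intervalIntegrable _ _)
    intro x hx
    show Real.exp (-x ^ 2 / 2) ≤ Real.exp (-(2 * c - x) ^ 2 / 2)
    apply Real.exp_le_exp.mpr
    nlinarith [mul_nonneg hc.le (sub_nonneg.mpr hx.1)]
  rw [← e1] at hle
  nlinarith [mul_le_mul_of_nonneg_left hle C_pos.le]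

lemma key_le_one {c m : ℝ} (hc : 0 < c) :
    Q (c - m) + Q (c + m) ≤ 1 := by
  have h1 : Q (c + m) ≤ Q (m - c) := by
    rcases eq_or_lt_of_le (show m - c ≤ c + m by linarith) with h | h
    · rw [h]
    · exact (Q_strictAnti h).le
  have h2 : Q (m - c) + Q (c - m) = 1 := by
    have := Q_neg (c - m)
    rw [show -(c - m) = m - c by ring] at this
    linarith
  linarith

lemma key_lt {c m1 m2 : ℝ} (hc : 0 < c) (hm1 : 0 < m1) (h12 : m1 < m2) :
    Q (c - m1) + Q (c + m1) < Q (c - m2) + Q (c + m2) := by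
  have d1 := Q_sub (c - m2) (c - m1)
  have d2 := Q_sub (c + m1) (c + m2)
  have e1 : ∫ x in (c + m1)..(c + m2), φ x
      = ∫ x in (-(c + m2))..(-(c + m1)), φ x := by
    rw [← intervalIntegral.integral_comp_neg φ]
    apply intervalIntegral.integral_congr
    intro x _; simp [φ, neg_sq]
  have e2 : ∫ x in (-(c + m2))..(-(c + m1)), φ x
      = ∫ x in (c - m2)..(c - m1), φ (x - 2 * c) := by
    rw [intervalIntegral.integral_comp_sub_right φ (2 * c)]
    congr 1 <;> ring
  have hlt : ∫ x in (c - m2)..(c - m1), φ (x - 2 * c)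
      < ∫ x in (c - m2)..(c - m1), φ x := by
    have hfc : Continuous fun x : ℝ => φ (x - 2 * c) := by
      apply φ_cont.comp; continuity
    apply intervalIntegral.integral_lt_integral_of_continuousOn_of_le_of_exists_lt
      (by linarith) hfc.continuousOn φ_cont.continuousOn
    · intro x hx
      show Real.exp (-(x - 2 * c) ^ 2 / 2) ≤ Real.exp (-x ^ 2 / 2)
      apply Real.exp_le_exp.mpr
      have hx2 : x ≤ c - m1 := hx.2
      nlinarith [mul_nonneg hc.le (show 0 ≤ c - x by linarith)]
    · refine ⟨c - m1, ⟨by linarith, le_rfl⟩, ?_⟩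
      show Real.exp (-(c - m1 - 2 * c) ^ 2 / 2) < Real.exp (-(c - m1) ^ 2 / 2)
      apply Real.exp_lt_exp.mpr
      nlinarith [mul_pos hc (show 0 < c - (c - m1) by linarith)]
  rw [e1, e2] at d2
  nlinarith [mul_lt_mul_of_pos_left hlt C_pos]

end QAux

open QAux in
theorem stmt4 (μ : ℝ) (hμ : 0 < μ) :
    (∀ x ∈ Set.Ioo (0 : ℝ) 1,
        x ≤ Q (Qinv (x / 2) - μ) + Q (Qinv (x / 2) + μ) ∧
        Q (Qinv (x / 2) - μ) + Q (Qinv (x / 2) + μ) ≤ 1) ∧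
    StrictMonoOn (fun x => Q (Qinv (x / 2) - μ) + Q (Qinv (x / 2) + μ)) (Set.Ioo 0 1) ∧
    (∀ x ∈ Set.Ioo (0 : ℝ) 1,
        StrictMonoOn (fun m => Q (Qinv (x / 2) - m) + Q (Qinv (x / 2) + m)) (Set.Ioi 0)) := by
  refine ⟨fun x hx => ?_, ?_, fun x hx => ?_⟩
  · have hc := Qinv_pos hx
    have hx2 : x / 2 ∈ Set.Ioo (0:ℝ) 1 := ⟨by linarith [hx.1], by linarith [hx.2]⟩
    have hq := Q_Qinv hx2
    constructor
    · have := key_le hc hμ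
      rw [hq] at this
      linarith
    · exact key_le_one hc
  · intro x1 h1 x2 h2 hlt
    have hx1 : x1 / 2 ∈ Set.Ioo (0:ℝ) 1 := ⟨by linarith [h1.1], by linarith [h1.2]⟩
    have hx2 : x2 / 2 ∈ Set.Ioo (0:ℝ) 1 := ⟨by linarith [h2.1], by linarith [h2.2]⟩
    have hcc : Qinv (x2 / 2) < Qinv (x1 / 2) := by
      by_contra h
      push_neg at h
      have := Q_strictAnti.antitone h
      rw [Q_Qinv hx1, Q_Qinv hx2] at this
      linarith
    have a1 : Q (Qinv (x1 / 2) - μ) < Q (Qinv (x2 / 2) - μ) :=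
      Q_strictAnti (by linarith)
    have a2 : Q (Qinv (x1 / 2) + μ) < Q (Qinv (x2 / 2) + μ) :=
      Q_strictAnti (by linarith)
    simpa using add_lt_add a1 a2
  · intro m1 hm1 m2 _ hlt
    exact key_lt (Qinv_pos hx) hm1 hlt
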